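/- arXiv:1702.08055 — 2 statements merged into one kernel-verified Lean document; each statement's English description precedes it below -/
import Mathlib

section
/- Let N ≥ 2 and for each i ∈ {1,…,N} let 𝒳_i be a nonempty finite type. For each i let C_i ⊆ {1,…,i−1} and C̄_i ⊆ {1,…,i−1} be context sets, let p_i(x_i | x_{C_i}) be a conditional probability mass function (nonnegative and summing to 1 over x_i ∈ 𝒳_i for every configuration x_{C_i}), and let q_i(x_i | x_{C̄_i}) be a strictly positive conditional probability mass function. Define the joint pmfs p(x_1,…,x_N) = ∏_{i=1}^N p_i(x_i | x_{C_i}) and q(x_1,…,x_N) = ∏_{i=1}^N q_i(x_i | x_{C̄_i}). Then D(p ‖ q) = Σ_{i=1}^N Σ_{x_{C_i ∪ C̄_i}} p_{C_i ∪ C̄_i}(x_{C_i ∪ C̄_i}) · D( p_i(· | x_{C_i}) ‖ q_i(· | x_{C̄_i}) ), where p_{C_i ∪ C̄_i} denotes the marginal of p on the coordinates in C_i ∪ C̄_i. -/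
open scoped Classical BigOperators

/-- Kullback–Leibler divergence between two pmfs on a finite type,
with the convention `0 * log (0 / v x) = 0` (automatic since `0 * r = 0` in `ℝ`). -/
noncomputable def klDiv {α : Type*} [Fintype α] (u v : α → ℝ) : ℝ :=
  ∑ x, u x * Real.log (u x / v x)

/-- Extension of a configuration on the coordinates in `S` to a full configuration
(arbitrary values outside `S`). -/
noncomputable def extendConfig {N : ℕ} {𝒳 : Fin N → Type*} [∀ i, Nonempty (𝒳 i)]
    (S : Finset (Fin N)) (xS : ∀ j : {j // j ∈ S}, 𝒳 j.1) : ∀ j, 𝒳 j :=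
  fun j => if h : j ∈ S then xS ⟨j, h⟩ else Classical.arbitrary (𝒳 j)

/-- Marginal of a joint pmf `P` on the coordinates in `S`. -/
noncomputable def marginal {N : ℕ} {𝒳 : Fin N → Type*} [∀ i, Fintype (𝒳 i)]
    (P : (∀ j, 𝒳 j) → ℝ) (S : Finset (Fin N)) (xS : ∀ j : {j // j ∈ S}, 𝒳 j.1) : ℝ :=
  ∑ z : ∀ j, 𝒳 j, if ∀ j : {j // j ∈ S}, z j.1 = xS j then P z else 0

/-!
Taking logarithms splits `D(p ‖ q)` into the sum over `i` of `E_p[log (p_i / q_i)(x_i)]`. Every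
kernel depends only on earlier coordinates, so the kernels after `i` can be summed out one at a
time, starting from the last coordinate; averaging the `i`-th coordinate against `p_i` then turns
the `i`-th term into `E_p[D(p_i(· | x) ‖ q_i(· | x))]`. This integrand depends only on
`x_{C_i ∪ C̄_i}`, so it can be integrated against the marginal on those coordinates.
-/

open Finset Function

theorem apply_update_eq_of_notMem {ι β : Type*} [DecidableEq ι] {𝒳 : ι → Type*}
    {C : Finset ι} {f : (∀ j, 𝒳 j) → β}
    (hf : ∀ x y, (∀ j ∈ C, x j = y j) → f x = f y) {j : ι} (hj : j ∉ C)
    (x : ∀ j, 𝒳 j) (a : 𝒳 j) : f (update x j a) = f x :=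
  hf _ _ fun _ hk => update_of_ne (ne_of_mem_of_not_mem hk hj) _ _

section Kernels

variable {ι : Type*} [Fintype ι] [LinearOrder ι] {𝒳 : ι → Type*} [∀ i, Fintype (𝒳 i)]

theorem card_smul_sum_apply_self {M : Type*} [AddCommMonoid M] (i : ι)
    (φ : (∀ j, 𝒳 j) → 𝒳 i → M) (hφ : ∀ x a, φ (update x i a) = φ x) :
    Fintype.card (𝒳 i) • ∑ x, φ x (x i) = ∑ x, ∑ a, φ x a := by
  have hinv : Involutive fun z : (∀ j, 𝒳 j) × 𝒳 i => (update z.1 i z.2, z.1 i) := by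
    rintro ⟨x, a⟩
    simp
  calc Fintype.card (𝒳 i) • ∑ x, φ x (x i)
      = ∑ z : (∀ j, 𝒳 j) × 𝒳 i, φ z.1 (z.1 i) := by
        simp only [Fintype.sum_prod_type, sum_const, card_univ, smul_sum]
    _ = ∑ z : (∀ j, 𝒳 j) × 𝒳 i, φ z.1 z.2 :=
        Fintype.sum_bijective _ hinv.bijective _ _ fun ⟨x, a⟩ => by simp [hφ]
    _ = ∑ x, ∑ a, φ x a := Fintype.sum_prod_type _

/- Kernels are summed out against the uniform distribution, so the product space never has to
be split into coordinate blocks; the price is the factor `∏ k ∈ S, card (𝒳 k)`. -/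
theorem prod_card_mul_sum_mul_prod_kernel {R : Type*} [CommSemiring R]
    (p : ∀ k, (∀ j, 𝒳 j) → 𝒳 k → R)
    (hp : ∀ k j x a, k ≤ j → p k (update x j a) = p k x) (hp1 : ∀ k x, ∑ a, p k x a = 1)
    (S : Finset ι) (G : (∀ j, 𝒳 j) → R) (hG : ∀ j ∈ S, ∀ x a, G (update x j a) = G x) :
    (∏ k ∈ S, (Fintype.card (𝒳 k) : R)) * ∑ x, G x * ∏ k ∈ S, p k x (x k) = ∑ x, G x := by
  induction S using Finset.induction_on_max generalizing G with
  | empty => simp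
  | insert a s hlt ih =>
    have ha : a ∉ s := fun h => lt_irrefl a (hlt a h)
    set F : (∀ j, 𝒳 j) → R := fun x => G x * ∏ k ∈ s, p k x (x k)
    have hF : ∀ x b, F (update x a b) = F x := fun x b => by
      refine congrArg₂ _ (hG a (mem_insert_self a s) x b) (prod_congr rfl fun k hk => ?_)
      rw [hp k a x b (hlt k hk).le, update_of_ne (hlt k hk).ne]
    have hsum_a : (Fintype.card (𝒳 a) : R) * ∑ x, F x * p a x (x a) = ∑ x, F x := by
      rw [← nsmul_eq_mul, card_smul_sum_apply_self a (fun x b => F x * p a x b)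
        fun x b => by rw [hF, hp a a x b le_rfl]]
      simp only [← mul_sum, hp1, mul_one]
    calc (∏ k ∈ insert a s, (Fintype.card (𝒳 k) : R)) *
          ∑ x, G x * ∏ k ∈ insert a s, p k x (x k)
        = (∏ k ∈ s, (Fintype.card (𝒳 k) : R)) *
            ((Fintype.card (𝒳 a) : R) * ∑ x, F x * p a x (x a)) := by
          simp only [prod_insert ha, F, mul_sum]
          exact sum_congr rfl fun x _ => by ring
      _ = ∑ x, G x := by
          rw [hsum_a]
          exact ih G fun j hj => hG j (mem_insert_of_mem hj)

theorem prod_card_mul_sum_prod_kernel_mul {R : Type*} [CommSemiring R]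
    (p : ∀ k, (∀ j, 𝒳 j) → 𝒳 k → R)
    (hp : ∀ k j x a, k ≤ j → p k (update x j a) = p k x) (hp1 : ∀ k x, ∑ a, p k x a = 1)
    (i : ι) (G : (∀ j, 𝒳 j) → R) (hG : ∀ j x a, i < j → G (update x j a) = G x) :
    (∏ k ∈ univ.filter (i < ·), (Fintype.card (𝒳 k) : R)) * ∑ x, (∏ k, p k x (x k)) * G x =
      ∑ x, (∏ k ∈ univ.filter (· ≤ i), p k x (x k)) * G x := by
  have hsplit : ∀ x, ∏ k, p k x (x k) =
      (∏ k ∈ univ.filter (· ≤ i), p k x (x k)) * ∏ k ∈ univ.filter (i < ·), p k x (x k) := by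
    simp only [← prod_filter_mul_prod_filter_not univ (· ≤ i), not_le, implies_true]
  rw [← prod_card_mul_sum_mul_prod_kernel p hp hp1 (univ.filter (i < ·))
    (fun x => (∏ k ∈ univ.filter (· ≤ i), p k x (x k)) * G x) fun j hj x a => ?_]
  · simp only [hsplit]
    exact congrArg _ (sum_congr rfl fun x _ => by ring)
  · have hij := (mem_filter.1 hj).2
    refine congrArg₂ _ (prod_congr rfl fun k hk => ?_) (hG j x a hij)
    have hkj := (mem_filter.1 hk).2.trans_lt hij
    rw [hp k j x a hkj.le, update_of_ne hkj.ne]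

theorem sum_prod_kernel_mul_apply [∀ i, Nonempty (𝒳 i)] {R : Type*} [Field R] [CharZero R]
    (p : ∀ k, (∀ j, 𝒳 j) → 𝒳 k → R)
    (hp : ∀ k j x a, k ≤ j → p k (update x j a) = p k x) (hp1 : ∀ k x, ∑ a, p k x a = 1)
    (i : ι) (g : (∀ j, 𝒳 j) → 𝒳 i → R) (hg : ∀ j x a, i ≤ j → g (update x j a) = g x) :
    ∑ x, (∏ k, p k x (x k)) * g x (x i) = ∑ x, (∏ k, p k x (x k)) * ∑ a, p i x a * g x a := by
  set L : (∀ j, 𝒳 j) → R := fun x => ∏ k ∈ univ.filter (· < i), p k x (x k)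
  set m : (∀ j, 𝒳 j) → R := fun x => ∑ a, p i x a * g x a
  have hL : ∀ x a, L (update x i a) = L x := fun x a =>
    prod_congr rfl fun k hk => by
      have hki := (mem_filter.1 hk).2
      rw [hp k i x a hki.le, update_of_ne hki.ne]
  have hm : ∀ j x a, i ≤ j → m (update x j a) = m x := fun j x a hij => by
    simp only [m, hp i j x a hij, hg j x a hij]
  have hhead : ∀ x, ∏ k ∈ univ.filter (· ≤ i), p k x (x k) = L x * p i x (x i) := fun x => by
    rw [mul_comm, ← mul_prod_erase (univ.filter (· ≤ i)) (fun k => p k x (x k))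
      (mem_filter.2 ⟨mem_univ i, le_rfl⟩)]
    congr 1
    exact prod_congr (by ext k; simp [lt_iff_le_and_ne, and_comm]) fun _ _ => rfl
  have hcard : ∀ φ : (∀ j, 𝒳 j) → 𝒳 i → R, (∀ x a, φ (update x i a) = φ x) →
      (Fintype.card (𝒳 i) : R) * ∑ x, φ x (x i) = ∑ x, ∑ a, φ x a := fun φ hφ => by
    rw [← nsmul_eq_mul, card_smul_sum_apply_self i φ hφ]
  have hcard_ne : ∀ k, (Fintype.card (𝒳 k) : R) ≠ 0 := fun k =>
    Nat.cast_ne_zero.2 Fintype.card_ne_zero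
  refine mul_left_cancel₀ (mul_ne_zero (hcard_ne i)
    (prod_ne_zero_iff (s := univ.filter (i < ·)).2 fun k _ => hcard_ne k)) ?_
  calc _ = (Fintype.card (𝒳 i) : R) * ∑ x, L x * p i x (x i) * g x (x i) := by
        rw [mul_assoc, prod_card_mul_sum_prod_kernel_mul p hp hp1 i _
          fun j x a hij => by rw [hg j x a hij.le, update_of_ne hij.ne]]
        simp only [hhead]
    _ = ∑ x, L x * m x := by
        rw [hcard (fun x a => L x * p i x a * g x a) fun x a => by
          simp only [hL x a, hp i i x a le_rfl, hg i x a le_rfl]]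
        simp only [m, mul_sum, mul_assoc]
    _ = (Fintype.card (𝒳 i) : R) * ∑ x, L x * p i x (x i) * m x := by
        rw [hcard (fun x a => L x * p i x a * m x) fun x a => by
          simp only [hL x a, hp i i x a le_rfl, hm i x a le_rfl]]
        simp only [mul_right_comm _ _ (m _), ← mul_sum, hp1, mul_one]
    _ = _ := by
        rw [mul_assoc, prod_card_mul_sum_prod_kernel_mul p hp hp1 i m
          fun j x a hij => hm j x a hij.le]
        simp only [hhead]

end Kernels

theorem mul_log_prod_div_prod {ι : Type*} (s : Finset ι) (u v : ι → ℝ)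
    (hv : ∀ i ∈ s, v i ≠ 0) :
    (∏ i ∈ s, u i) * Real.log ((∏ i ∈ s, u i) / ∏ i ∈ s, v i) =
      ∑ i ∈ s, (∏ k ∈ s, u k) * Real.log (u i / v i) := by
  by_cases hu : ∏ i ∈ s, u i = 0
  · simp [hu]
  rw [← prod_div_distrib, Real.log_prod fun i hi => div_ne_zero (prod_ne_zero_iff.1 hu i hi)
    (hv i hi), mul_sum]

theorem klDiv_prod_eq_sum {ι α : Type*} [Fintype ι] [Fintype α] (u v : ι → α → ℝ)
    (hv : ∀ i x, v i x ≠ 0) :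
    klDiv (fun x => ∏ i, u i x) (fun x => ∏ i, v i x) =
      ∑ i, ∑ x, (∏ k, u k x) * Real.log (u i x / v i x) := by
  rw [klDiv, sum_comm]
  exact sum_congr rfl fun x _ => mul_log_prod_div_prod _ _ _ fun i _ => hv i x

theorem sum_marginal_mul_extendConfig {N : ℕ} {𝒳 : Fin N → Type*} [∀ i, Fintype (𝒳 i)]
    [∀ i, Nonempty (𝒳 i)] (P : (∀ j, 𝒳 j) → ℝ) (S : Finset (Fin N)) (f : (∀ j, 𝒳 j) → ℝ)
    (hf : ∀ x y, (∀ j ∈ S, x j = y j) → f x = f y) :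
    ∑ xS, marginal P S xS * f (extendConfig S xS) = ∑ x, P x * f x := by
  simp only [marginal, sum_mul, ite_mul, zero_mul]
  rw [sum_comm]
  refine sum_congr rfl fun z _ => ?_
  simp only [← funext_iff, sum_ite_eq, mem_univ, if_true]
  exact congrArg _ (hf _ _ fun j hj => by simp [extendConfig, hj])

theorem divergence_chain_rule_general
    (N : ℕ)
    (𝒳 : Fin N → Type*) [∀ i, Fintype (𝒳 i)] [∀ i, Nonempty (𝒳 i)]
    (C Cbar : Fin N → Finset (Fin N))
    (hC : ∀ i, ∀ j ∈ C i, j < i)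
    (hCbar : ∀ i, ∀ j ∈ Cbar i, j < i)
    (p q : ∀ i : Fin N, (∀ j, 𝒳 j) → 𝒳 i → ℝ)
    (hpdep : ∀ i, ∀ x y : ∀ j, 𝒳 j, (∀ j ∈ C i, x j = y j) → p i x = p i y)
    (hqdep : ∀ i, ∀ x y : ∀ j, 𝒳 j, (∀ j ∈ Cbar i, x j = y j) → q i x = q i y)
    (hp1 : ∀ i x, ∑ xi, p i x xi = 1)
    (hqpos : ∀ i x xi, 0 < q i x xi) :
    klDiv (fun x : ∀ j, 𝒳 j => ∏ i, p i x (x i))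
          (fun x : ∀ j, 𝒳 j => ∏ i, q i x (x i)) =
      ∑ i : Fin N, ∑ xS : ∀ j : {j // j ∈ C i ∪ Cbar i}, 𝒳 j.1,
        marginal (fun x : ∀ j, 𝒳 j => ∏ k, p k x (x k)) (C i ∪ Cbar i) xS *
          klDiv (p i (extendConfig (C i ∪ Cbar i) xS))
                (q i (extendConfig (C i ∪ Cbar i) xS)) := by
  have hp : ∀ k j x a, k ≤ j → p k (update x j a) = p k x := fun k j x a hkj =>
    apply_update_eq_of_notMem (hpdep k) (fun hj => (hC k j hj).not_ge hkj) x a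
  have hq : ∀ k j x a, k ≤ j → q k (update x j a) = q k x := fun k j x a hkj =>
    apply_update_eq_of_notMem (hqdep k) (fun hj => (hCbar k j hj).not_ge hkj) x a
  rw [klDiv_prod_eq_sum (fun i x => p i x (x i)) _ fun i x => (hqpos i x (x i)).ne']
  refine sum_congr rfl fun i _ => ?_
  rw [sum_marginal_mul_extendConfig _ _ (fun x => klDiv (p i x) (q i x)) fun x y hxy => by
    rw [hpdep i x y fun j hj => hxy j (mem_union_left _ hj),
      hqdep i x y fun j hj => hxy j (mem_union_right _ hj)]]
  exact sum_prod_kernel_mul_apply p hp hp1 i (fun x a => Real.log (p i x a / q i x a))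
    fun j x a hij => by simp only [hp i j x a hij, hq i j x a hij]

/-- Lemma 1 of the paper: chain rule for the divergence between two products of
conditional distributions with (possibly different) contexts `C i`, `C̄ i ⊆ {0,…,i−1}`.
Conditional pmfs are modeled as functions of the full configuration that depend only
on the coordinates in their context set. -/
theorem divergence_chain_rule
    (N : ℕ) (hN : 2 ≤ N)
    (𝒳 : Fin N → Type*) [∀ i, Fintype (𝒳 i)] [∀ i, Nonempty (𝒳 i)]
    (C Cbar : Fin N → Finset (Fin N))
    (hC : ∀ i, ∀ j ∈ C i, j < i)
    (hCbar : ∀ i, ∀ j ∈ Cbar i, j < i)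
    (p q : ∀ i : Fin N, (∀ j, 𝒳 j) → 𝒳 i → ℝ)
    (hpdep : ∀ i, ∀ x y : ∀ j, 𝒳 j, (∀ j ∈ C i, x j = y j) → p i x = p i y)
    (hqdep : ∀ i, ∀ x y : ∀ j, 𝒳 j, (∀ j ∈ Cbar i, x j = y j) → q i x = q i y)
    (hp0 : ∀ i x xi, 0 ≤ p i x xi)
    (hp1 : ∀ i x, ∑ xi, p i x xi = 1)
    (hqpos : ∀ i x xi, 0 < q i x xi)
    (hq1 : ∀ i x, ∑ xi, q i x xi = 1) :
    klDiv (fun x : ∀ j, 𝒳 j => ∏ i, p i x (x i))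
          (fun x : ∀ j, 𝒳 j => ∏ i, q i x (x i)) =
      ∑ i : Fin N, ∑ xS : ∀ j : {j // j ∈ C i ∪ Cbar i}, 𝒳 j.1,
        marginal (fun x : ∀ j, 𝒳 j => ∏ k, p k x (x k)) (C i ∪ Cbar i) xS *
          klDiv (p i (extendConfig (C i ∪ Cbar i) xS))
                (q i (extendConfig (C i ∪ Cbar i) xS)) :=
  divergence_chain_rule_general N 𝒳 C Cbar hC hCbar p q hpdep hqdep hp1 hqpos
end

section
/- Let X₀, X₁, X₂ be random variables on a probability space taking values in the same nonempty finite type, such that (i) X₀ and X₂ are conditionally independent given X₁ (the Markov property), and (ii) the joint distribution of (X₀, X₁) equals the joint distribution of (X₁, X₂) (row stationarity). Then I(X₁ ; X₀) − I(X₁ ; X₂ | X₀) = I(X₂ ; X₀), where I(· ; ·) is mutual information and I(· ; · | ·) is conditional mutual information. -/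
open scoped BigOperators
open MeasureTheory

/-- `pr μ X x = P(X = x)` for a random variable `X` on `(Ω, μ)`. -/
noncomputable def pr {Ω α : Type*} [MeasurableSpace Ω] (μ : Measure Ω)
    (X : Ω → α) (x : α) : ℝ :=
  (μ (X ⁻¹' {x})).toReal

/-- Shannon entropy `H(X) = −Σ_x P(X = x) log P(X = x)` of a finite-valued random variable. -/
noncomputable def entropy {Ω α : Type*} [MeasurableSpace Ω] [Fintype α]
    (μ : Measure Ω) (X : Ω → α) : ℝ :=
  ∑ x, Real.negMulLog (pr μ X x)

/-- Conditional Shannon entropy `H(X | Y) = H(X, Y) − H(Y)`. -/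
noncomputable def condEntropy {Ω α β : Type*} [MeasurableSpace Ω] [Fintype α] [Fintype β]
    (μ : Measure Ω) (X : Ω → α) (Y : Ω → β) : ℝ :=
  entropy μ (fun ω => (X ω, Y ω)) - entropy μ Y

/-- Mutual information `I(X ; Y) = H(X) − H(X | Y)`. -/
noncomputable def mutualInfo {Ω α β : Type*} [MeasurableSpace Ω] [Fintype α] [Fintype β]
    (μ : Measure Ω) (X : Ω → α) (Y : Ω → β) : ℝ :=
  entropy μ X - condEntropy μ X Y

/-- Conditional mutual information `I(X ; Z | Y) = H(X | Y) + H(Z | Y) − H(X, Z | Y)`. -/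
noncomputable def condMutualInfo {Ω α β γ : Type*} [MeasurableSpace Ω]
    [Fintype α] [Fintype β] [Fintype γ]
    (μ : Measure Ω) (X : Ω → α) (Z : Ω → β) (Y : Ω → γ) : ℝ :=
  condEntropy μ X Y + condEntropy μ Z Y - condEntropy μ (fun ω => (X ω, Z ω)) Y

section Aux

variable {Ω : Type*} [MeasurableSpace Ω] (μ : MeasureTheory.Measure Ω)
  [MeasureTheory.IsProbabilityMeasure μ]

lemma pr_nonneg {α : Type*} (X : Ω → α) (x : α) : 0 ≤ pr μ X x :=
  ENNReal.toReal_nonneg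

lemma pr_le {α β : Type*} (X : Ω → α) (Y : Ω → β) (x : α) (y : β)
    (h : X ⁻¹' {x} ⊆ Y ⁻¹' {y}) : pr μ X x ≤ pr μ Y y :=
  ENNReal.toReal_mono (MeasureTheory.measure_ne_top μ _) (MeasureTheory.measure_mono h)

lemma pr_comp_equiv {α β : Type*} (e : α ≃ β) (W : Ω → α) (x : α) :
    pr μ (fun ω => e (W ω)) (e x) = pr μ W x := by
  unfold pr
  congr 2
  ext ω
  simp [e.injective.eq_iff]

lemma entropy_comp_equiv {α β : Type*} [Fintype α] [Fintype β] (e : α ≃ β) (W : Ω → α) :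
    entropy μ (fun ω => e (W ω)) = entropy μ W := by
  unfold entropy
  rw [← e.sum_comp (fun y => Real.negMulLog (pr μ (fun ω => e (W ω)) y))]
  exact Finset.sum_congr rfl fun x _ => by rw [pr_comp_equiv]

lemma pr_sum_right {α β : Type*} [Fintype β]
    [MeasurableSpace α] [MeasurableSingletonClass α]
    [MeasurableSpace β] [MeasurableSingletonClass β]
    (W : Ω → α) (Z : Ω → β) (hW : Measurable W) (hZ : Measurable Z) (w : α) :
    ∑ z, pr μ (fun ω => (W ω, Z ω)) (w, z) = pr μ W w := by
  unfold pr
  rw [← ENNReal.toReal_sum (fun _ _ => MeasureTheory.measure_ne_top μ _)]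
  congr 1
  rw [← MeasureTheory.measure_biUnion_finset]
  · congr 1
    ext ω
    simp [Prod.ext_iff]
  · intro i _ j _ hij
    simp only [Function.onFun, Set.disjoint_left]
    intro ω h1 h2
    simp only [Set.mem_preimage, Set.mem_singleton_iff, Prod.ext_iff] at h1 h2
    exact hij (h1.2.symm.trans h2.2)
  · intro z _
    exact (hW.prodMk hZ) (measurableSet_singleton _)

lemma pr_sum_left {α β : Type*} [Fintype α]
    [MeasurableSpace α] [MeasurableSingletonClass α]
    [MeasurableSpace β] [MeasurableSingletonClass β]
    (W : Ω → α) (Z : Ω → β) (hW : Measurable W) (hZ : Measurable Z) (z : β) :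
    ∑ w, pr μ (fun ω => (W ω, Z ω)) (w, z) = pr μ Z z := by
  unfold pr
  rw [← ENNReal.toReal_sum (fun _ _ => MeasureTheory.measure_ne_top μ _)]
  congr 1
  rw [← MeasureTheory.measure_biUnion_finset]
  · congr 1
    ext ω
    simp [Prod.ext_iff]
  · intro i _ j _ hij
    simp only [Function.onFun, Set.disjoint_left]
    intro ω h1 h2
    simp only [Set.mem_preimage, Set.mem_singleton_iff, Prod.ext_iff] at h1 h2
    exact hij (h1.1.symm.trans h2.1)
  · intro z _
    exact (hW.prodMk hZ) (measurableSet_singleton _)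

lemma negMulLog_split {P Q R S : ℝ} (hP : 0 ≤ P) (hR : 0 ≤ R) (hS : 0 ≤ S)
    (hPQ : P ≤ Q) (h : P * Q = R * S) :
    Real.negMulLog P = -(P * Real.log R) - P * Real.log S + P * Real.log Q := by
  rcases eq_or_lt_of_le hP with h0 | h0
  · simp [← h0]
  · have hQ : 0 < Q := lt_of_lt_of_le h0 hPQ
    have hRS : 0 < R * S := by rw [← h]; positivity
    have hR' : 0 < R := lt_of_le_of_ne hR (by rintro rfl; simp at hRS)
    have hS' : 0 < S := lt_of_le_of_ne hS (by rintro rfl; simp at hRS)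
    have hPe : P = R * S / Q := by field_simp; linarith
    have hlog : Real.log P = Real.log R + Real.log S - Real.log Q := by
      rw [hPe, Real.log_div (by positivity) hQ.ne', Real.log_mul hR'.ne' hS'.ne']
    rw [Real.negMulLog, hlog]
    ring

end Aux

/-- Key identity in the proof of Proposition 4 of the paper: for a row-stationary Markov
triple `X₀, X₁, X₂` (values in the same finite type),
`I(X₁ ; X₀) − I(X₁ ; X₂ | X₀) = I(X₂ ; X₀)`.
The Markov property `X₀ ⊥ X₂ | X₁` is stated in the product form
`P(X₀=a, X₁=b, X₂=c)·P(X₁=b) = P(X₀=a, X₁=b)·P(X₁=b, X₂=c)`, and row stationarity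
as equality of the joint distributions of `(X₀, X₁)` and `(X₁, X₂)`. -/
theorem stationary_markov_information_identity
    {Ω : Type*} [MeasurableSpace Ω] (μ : Measure Ω) [IsProbabilityMeasure μ]
    {α : Type*} [Fintype α] [Nonempty α]
    [MeasurableSpace α] [MeasurableSingletonClass α]
    (X₀ X₁ X₂ : Ω → α)
    (hX₀ : Measurable X₀) (hX₁ : Measurable X₁) (hX₂ : Measurable X₂)
    (hMarkov : ∀ a b c : α,
      pr μ (fun ω => (X₀ ω, X₁ ω, X₂ ω)) (a, b, c) * pr μ X₁ b
        = pr μ (fun ω => (X₀ ω, X₁ ω)) (a, b) * pr μ (fun ω => (X₁ ω, X₂ ω)) (b, c))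
    (hStat : ∀ a b : α,
      pr μ (fun ω => (X₀ ω, X₁ ω)) (a, b) = pr μ (fun ω => (X₁ ω, X₂ ω)) (a, b)) :
    mutualInfo μ X₁ X₀ - condMutualInfo μ X₁ X₂ X₀ = mutualInfo μ X₂ X₀ := by
  classical
  let P : α → α → α → ℝ := fun a b c => pr μ (fun ω => (X₀ ω, X₁ ω, X₂ ω)) (a, b, c)
  let R : α → α → ℝ := fun a b => pr μ (fun ω => (X₀ ω, X₁ ω)) (a, b)
  let S : α → α → ℝ := fun b c => pr μ (fun ω => (X₁ ω, X₂ ω)) (b, c)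
  let Q : α → ℝ := fun b => pr μ X₁ b
  -- marginal identities
  have hsumc : ∀ a b, ∑ c, P a b c = R a b := by
    intro a b
    have key : ∀ c, P a b c
        = pr μ (fun ω => ((X₀ ω, X₁ ω), X₂ ω)) ((a, b), c) := by
      intro c
      have h := pr_comp_equiv μ (Equiv.prodAssoc α α α)
        (fun ω => ((X₀ ω, X₁ ω), X₂ ω)) ((a, b), c)
      simpa [Equiv.prodAssoc] using h
    simp only [key]
    exact pr_sum_right μ (fun ω => (X₀ ω, X₁ ω)) X₂ (hX₀.prodMk hX₁) hX₂ (a, b)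
  have hsuma : ∀ b c, ∑ a, P a b c = S b c := fun b c =>
    pr_sum_left μ X₀ (fun ω => (X₁ ω, X₂ ω)) hX₀ (hX₁.prodMk hX₂) (b, c)
  have hRb : ∀ b, ∑ a, R a b = Q b := fun b => pr_sum_left μ X₀ X₁ hX₀ hX₁ b
  have hSb : ∀ b, ∑ c, S b c = Q b := fun b => pr_sum_right μ X₁ X₂ hX₁ hX₂ b
  -- equal marginals
  have hpr01 : ∀ a, pr μ X₀ a = pr μ X₁ a := by
    intro a
    rw [← pr_sum_right μ X₀ X₁ hX₀ hX₁ a, ← pr_sum_right μ X₁ X₂ hX₁ hX₂ a]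
    exact Finset.sum_congr rfl fun b _ => hStat a b
  have hpr21 : ∀ c, pr μ X₂ c = pr μ X₁ c := by
    intro c
    rw [← pr_sum_left μ X₁ X₂ hX₁ hX₂ c, ← pr_sum_left μ X₀ X₁ hX₀ hX₁ c]
    exact (Finset.sum_congr rfl fun b _ => (hStat b c).symm)
  have hH0 : entropy μ X₀ = entropy μ X₁ :=
    Finset.sum_congr rfl fun a _ => by rw [hpr01 a]
  have hH2 : entropy μ X₂ = entropy μ X₁ :=
    Finset.sum_congr rfl fun c _ => by rw [hpr21 c]
  -- P a b c ≤ Q b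
  have hPQ : ∀ a b c, P a b c ≤ Q b := by
    intro a b c
    apply pr_le
    intro ω hω
    simp only [Set.mem_preimage, Set.mem_singleton_iff, Prod.ext_iff] at hω ⊢
    exact hω.2.1
  -- key per-b entropy identity
  have hkey : ∀ b, (∑ a, ∑ c, Real.negMulLog (P a b c)) + Real.negMulLog (Q b)
      = (∑ a, Real.negMulLog (R a b)) + ∑ c, Real.negMulLog (S b c) := by
    intro b
    have split : ∀ a c, Real.negMulLog (P a b c)
        = -(P a b c * Real.log (R a b)) - P a b c * Real.log (S b c)
          + P a b c * Real.log (Q b) := fun a c =>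
      negMulLog_split (pr_nonneg μ _ _) (pr_nonneg μ _ _) (pr_nonneg μ _ _)
        (hPQ a b c) (hMarkov a b c)
    have h1 : ∑ a, ∑ c, P a b c * Real.log (R a b)
        = ∑ a, R a b * Real.log (R a b) := by
      refine Finset.sum_congr rfl fun a _ => ?_
      rw [← Finset.sum_mul, hsumc a b]
    have h2 : ∑ a, ∑ c, P a b c * Real.log (S b c)
        = ∑ c, S b c * Real.log (S b c) := by
      rw [Finset.sum_comm]
      refine Finset.sum_congr rfl fun c _ => ?_
      rw [← Finset.sum_mul, hsuma b c]
    have h3 : ∑ a, ∑ c, P a b c * Real.log (Q b) = Q b * Real.log (Q b) := by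
      have : ∀ a, ∑ c, P a b c * Real.log (Q b) = R a b * Real.log (Q b) := by
        intro a; rw [← Finset.sum_mul, hsumc a b]
      simp only [this]
      rw [← Finset.sum_mul, hRb b]
    have expand : ∑ a, ∑ c, Real.negMulLog (P a b c)
        = -(∑ a, ∑ c, P a b c * Real.log (R a b))
          - (∑ a, ∑ c, P a b c * Real.log (S b c))
          + ∑ a, ∑ c, P a b c * Real.log (Q b) := by
      simp only [split, Finset.sum_add_distrib, Finset.sum_sub_distrib, Finset.sum_neg_distrib]
    have hnR : ∑ a, Real.negMulLog (R a b) = -∑ a, R a b * Real.log (R a b) := by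
      simp [Real.negMulLog, Finset.sum_neg_distrib]
    have hnS : ∑ c, Real.negMulLog (S b c) = -∑ c, S b c * Real.log (S b c) := by
      simp [Real.negMulLog, Finset.sum_neg_distrib]
    have hnQ : Real.negMulLog (Q b) = -(Q b * Real.log (Q b)) := by
      simp [Real.negMulLog]
    rw [expand, h1, h2, h3, hnR, hnS, hnQ]
    ring
  -- total entropy identity
  have htot : entropy μ (fun ω => (X₀ ω, X₁ ω, X₂ ω)) + entropy μ X₁
      = entropy μ (fun ω => (X₀ ω, X₁ ω)) + entropy μ (fun ω => (X₁ ω, X₂ ω)) := by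
    unfold entropy
    simp only [Fintype.sum_prod_type]
    show (∑ a, ∑ b, ∑ c, Real.negMulLog (P a b c)) + (∑ b, Real.negMulLog (Q b))
        = (∑ a, ∑ b, Real.negMulLog (R a b)) + ∑ b, ∑ c, Real.negMulLog (S b c)
    rw [Finset.sum_comm (f := fun a b => ∑ c, Real.negMulLog (P a b c)),
      Finset.sum_comm (f := fun a b => Real.negMulLog (R a b)),
      ← Finset.sum_add_distrib, ← Finset.sum_add_distrib]
    exact Finset.sum_congr rfl fun b _ => hkey b
  -- entropy swaps / reassociations
  have hswap10 : entropy μ (fun ω => (X₁ ω, X₀ ω)) = entropy μ (fun ω => (X₀ ω, X₁ ω)) := by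
    have h := entropy_comp_equiv μ (Equiv.prodComm α α) (fun ω => (X₁ ω, X₀ ω))
    simpa using h.symm
  have hH3 : entropy μ (fun ω => ((X₁ ω, X₂ ω), X₀ ω))
      = entropy μ (fun ω => (X₀ ω, X₁ ω, X₂ ω)) := by
    have h := entropy_comp_equiv μ (Equiv.prodComm (α × α) α)
      (fun ω => ((X₁ ω, X₂ ω), X₀ ω))
    simpa using h.symm
  have hH0112 : entropy μ (fun ω => (X₀ ω, X₁ ω)) = entropy μ (fun ω => (X₁ ω, X₂ ω)) :=
    Finset.sum_congr rfl fun x _ => by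
      have := hStat x.1 x.2
      simp only [Prod.mk.eta] at this
      rw [this]
  simp only [mutualInfo, condMutualInfo, condEntropy]
  linarith [htot, hswap10, hH3, hH0112, hH0, hH2]
end
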